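/- arXiv:2003.00384 — 9 statements merged into one kernel-verified Lean document; each statement's English description precedes it below -/
import Mathlib

section
/- Let V_0 : ℕ → ℝ be the zero function and define V_{k+1} = T V_k for all k ∈ ℕ, where (T V)(s) = min{ s + V(s+1), s + ω·C_u + p_z·V(s+1) + (1-p_z)·V(1) }. Then for every k ∈ ℕ, the function V_k is nondecreasing: V_k(s₁) ≤ V_k(s₂) whenever s₁ ≤ s₂. -/
/-- The Bellman value-iteration operator of the simplified AoCI MDP:
`(T V) s = min (s + V (s+1)) (s + ω·C_u + p_z·V (s+1) + (1-p_z)·V 1)`. -/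
noncomputable def bellmanT (p_z ω C_u : ℝ) (V : ℕ → ℝ) : ℕ → ℝ :=
  fun s => min ((s : ℝ) + V (s + 1))
    ((s : ℝ) + ω * C_u + p_z * V (s + 1) + (1 - p_z) * V 1)

/-- the value-iteration iterates `V_0 = 0`, `V_{k+1} = T V_k`
are all nondecreasing functions. -/
theorem valueIteration_monotone (p_z ω C_u : ℝ) (hpz0 : 0 < p_z) (hpz1 : p_z < 1)
    (hω : 0 ≤ ω) (hCu : 0 ≤ C_u) (Vseq : ℕ → ℕ → ℝ)
    (h0 : Vseq 0 = fun _ => (0 : ℝ))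
    (hstep : ∀ k, Vseq (k + 1) = bellmanT p_z ω C_u (Vseq k)) :
    ∀ k, Monotone (Vseq k) := by
  intro k
  induction k with
  | zero => rw [h0]; exact monotone_const
  | succ k ih =>
    rw [hstep]
    intro a b hab
    have hcast : (a : ℝ) ≤ (b : ℝ) := Nat.cast_le.mpr hab
    have hV : Vseq k (a + 1) ≤ Vseq k (b + 1) := ih (by omega)
    unfold bellmanT
    apply min_le_min
    · linarith
    · have : p_z * Vseq k (a + 1) ≤ p_z * Vseq k (b + 1) :=
        mul_le_mul_of_nonneg_left hV hpz0.le
      linarith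
end

section
/- Suppose V : ℕ → ℝ is nondecreasing. Then the state-action value function Q is sub-modular: for all s₁ ≤ s₂, Q(s₁,0) − Q(s₁,1) ≤ Q(s₂,0) − Q(s₂,1), where Q(s,0) = s + V(s+1) and Q(s,1) = s + ω·C_u + (1 − p_s·(1−p_r))·V(s+1) + p_s·(1−p_r)·V(1). -/
/-- sub-modularity of the state-action value function `Q`,
where `Q s 0 = s + V (s+1)` and
`Q s 1 = s + ω·C_u + (1 − p_s·(1−p_r))·V (s+1) + p_s·(1−p_r)·V 1`. -/
theorem Q_submodular (p_s p_r ω C_u : ℝ)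
    (hps0 : 0 < p_s) (hps1 : p_s ≤ 1) (hpr0 : 0 ≤ p_r) (hpr1 : p_r < 1)
    (hω : 0 ≤ ω) (hCu : 0 ≤ C_u) (V : ℕ → ℝ) (hV : Monotone V)
    (Q0 Q1 : ℕ → ℝ)
    (hQ0 : ∀ s : ℕ, Q0 s = (s : ℝ) + V (s + 1))
    (hQ1 : ∀ s : ℕ, Q1 s = (s : ℝ) + ω * C_u
      + (1 - p_s * (1 - p_r)) * V (s + 1) + p_s * (1 - p_r) * V 1) :
    ∀ s₁ s₂ : ℕ, s₁ ≤ s₂ → Q0 s₁ - Q1 s₁ ≤ Q0 s₂ - Q1 s₂ := by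
  intro s₁ s₂ h
  have ha : 0 ≤ p_s * (1 - p_r) := mul_nonneg hps0.le (by linarith)
  have hVle : V (s₁ + 1) ≤ V (s₂ + 1) := hV (by omega)
  rw [hQ0, hQ0, hQ1, hQ1]
  nlinarith [mul_le_mul_of_nonneg_left hVle ha]
end

section
/- Suppose V : ℕ → ℝ is nondecreasing, and define Q(s,0) = s + V(s+1) and Q(s,1) = s + ω·C_u + (1 − p_s·(1−p_r))·V(s+1) + p_s·(1−p_r)·V(1). If Q(s₁,1) ≤ Q(s₁,0) for some state s₁, then Q(s₂,1) ≤ Q(s₂,0) for every state s₂ ≥ s₁. That is, the policy choosing the minimizing action has a switching (threshold) structure: once updating is optimal at some AoCI value, it remains optimal at all larger AoCI values. -/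
/-- Theorem 1 of the paper: switching (threshold) structure of
the optimal policy.  With `Q s 0 = s + V (s+1)` and
`Q s 1 = s + ω·C_u + (1 − p_s·(1−p_r))·V (s+1) + p_s·(1−p_r)·V 1`,
if updating is optimal at `s₁` (i.e. `Q s₁ 1 ≤ Q s₁ 0`), then updating is
optimal at every `s₂ ≥ s₁`. -/
theorem switching_structure (p_s p_r ω C_u : ℝ)
    (hps0 : 0 < p_s) (hps1 : p_s ≤ 1) (hpr0 : 0 ≤ p_r) (hpr1 : p_r < 1)
    (hω : 0 ≤ ω) (hCu : 0 ≤ C_u) (V : ℕ → ℝ) (hV : Monotone V)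
    (Q0 Q1 : ℕ → ℝ)
    (hQ0 : ∀ s : ℕ, Q0 s = (s : ℝ) + V (s + 1))
    (hQ1 : ∀ s : ℕ, Q1 s = (s : ℝ) + ω * C_u
      + (1 - p_s * (1 - p_r)) * V (s + 1) + p_s * (1 - p_r) * V 1)
    (s₁ : ℕ) (h₁ : Q1 s₁ ≤ Q0 s₁) :
    ∀ s₂ : ℕ, s₁ ≤ s₂ → Q1 s₂ ≤ Q0 s₂ := by
  intro s₂ hs
  have hVm : V (s₁ + 1) ≤ V (s₂ + 1) := hV (by omega)
  have ha : 0 ≤ p_s * (1 - p_r) := mul_nonneg hps0.le (by linarith)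
  rw [hQ0, hQ1] at h₁ ⊢
  nlinarith [mul_le_mul_of_nonneg_left hVm ha]
end

section
/- Let Ω ≥ 1 be an integer and p_z ∈ (0,1). Define φ : {1,2,3,…} → ℝ by φ(s) = (1−p_z)/(Ω(1−p_z)+p_z) for 1 ≤ s ≤ Ω, and φ(s) = (1−p_z)·p_z^{s−Ω}/(Ω(1−p_z)+p_z) for s > Ω. Then φ satisfies the stationarity (balance) equations of the threshold chain: φ(s+1) = φ(s) for all 1 ≤ s < Ω; φ(s+1) = p_z·φ(s) for all s ≥ Ω; and φ(1) = (1−p_z)·Σ_{s=Ω}^{∞} φ(s). -/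
/-- the claimed stationary distribution satisfies the balance
equations of the threshold-Ω chain: `φ (s+1) = φ s` for `1 ≤ s < Ω`,
`φ (s+1) = p_z·φ s` for `s ≥ Ω`, and `φ 1 = (1−p_z)·Σ_{s=Ω}^∞ φ s`. -/
theorem stationary_balance_equations (Ω : ℕ) (hΩ : 1 ≤ Ω) (p_z : ℝ)
    (hpz0 : 0 < p_z) (hpz1 : p_z < 1) (φ : ℕ → ℝ)
    (hφ1 : ∀ s : ℕ, 1 ≤ s → s ≤ Ω →
      φ s = (1 - p_z) / ((Ω : ℝ) * (1 - p_z) + p_z))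
    (hφ2 : ∀ s : ℕ, Ω < s →
      φ s = (1 - p_z) * p_z ^ (s - Ω) / ((Ω : ℝ) * (1 - p_z) + p_z)) :
    (∀ s : ℕ, 1 ≤ s → s < Ω → φ (s + 1) = φ s) ∧
    (∀ s : ℕ, Ω ≤ s → φ (s + 1) = p_z * φ s) ∧
    φ 1 = (1 - p_z) * ∑' k : ℕ, φ (Ω + k) := by
  set D : ℝ := (Ω : ℝ) * (1 - p_z) + p_z with hD
  have hgen : ∀ k : ℕ, φ (Ω + k) = (1 - p_z) * p_z ^ k / D := by
    intro k
    cases k with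
    | zero => simpa using hφ1 Ω hΩ le_rfl
    | succ n =>
      have h := hφ2 (Ω + (n + 1)) (by omega)
      simpa [Nat.add_sub_cancel_left] using h
  refine ⟨?_, ?_, ?_⟩
  · intro s hs1 hs2
    rw [hφ1 s hs1 (le_of_lt hs2), hφ1 (s + 1) (by omega) (by omega)]
  · intro s hs
    obtain ⟨k, rfl⟩ := Nat.exists_eq_add_of_le hs
    rw [hgen k]
    have : Ω + k + 1 = Ω + (k + 1) := by ring
    rw [this, hgen (k + 1)]
    ring
  · have hsum : ∑' k : ℕ, φ (Ω + k) = 1 / D := by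
      have h1 : ∑' k : ℕ, φ (Ω + k) = ∑' k : ℕ, (1 - p_z) / D * p_z ^ k := by
        refine tsum_congr fun k => ?_
        rw [hgen k]; ring
      rw [h1, tsum_mul_left, tsum_geometric_of_lt_one hpz0.le hpz1]
      have hne : (1 : ℝ) - p_z ≠ 0 := by linarith
      rw [div_mul_eq_mul_div, mul_inv_cancel₀ hne, one_div]
    rw [hsum, hφ1 1 le_rfl hΩ]
    ring
end

section
/- Let Ω ≥ 1 be an integer, p_z ∈ (0,1), ω ≥ 0, C_u ≥ 0, and let φ(s) = (1−p_z)/(Ω(1−p_z)+p_z) for 1 ≤ s ≤ Ω and φ(s) = (1−p_z)·p_z^{s−Ω}/(Ω(1−p_z)+p_z) for s > Ω. Then the expected cost of the threshold-Ω policy satisfies Σ_{s=1}^{∞} φ(s)·(s + ω·C_u·1_{{s ≥ Ω}}) = ((1−p_z)/(Ω(1−p_z)+p_z)) · ( (Ω² − Ω)/2 + (Ω + ω·C_u)/(1−p_z) + p_z/(1−p_z)² ). -/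
/-!
Writing `c = (1 - p_z) / (Ω (1 - p_z) + p_z)`, the stationary distribution is `φ (Ω + n) = c p_z ^ n`
for every `n ≥ 0`, and the indicator `1_{s ≥ Ω}` is `1` exactly on this geometric tail. Splitting the
series at `s = Ω`, the head `∑_{s < Ω} c s` gives `c (Ω² - Ω) / 2`, and the tail
`∑_n c p_z ^ n (n + Ω + ω C_u)` is an arithmetico-geometric series.
-/

open Finset

theorem hasSum_add_mul_geometric {𝕜 : Type*} [NormedField 𝕜] [CompleteSpace 𝕜] {r : 𝕜}
    (hr : ‖r‖ < 1) (a : 𝕜) :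
    HasSum (fun n : ℕ => ((n : 𝕜) + a) * r ^ n) (a / (1 - r) + r / (1 - r) ^ 2) := by
  have hgeom := (hasSum_geometric_of_norm_lt_one hr).mul_left a
  convert (hasSum_coe_mul_geometric_of_norm_lt_one hr).add hgeom using 1
  · ext n
    ring
  · rw [div_eq_mul_inv]
    ring

theorem sum_range_cast_add_one (n : ℕ) :
    ∑ i ∈ range n, ((i : ℝ) + 1) = n * (n + 1) / 2 := by
  induction n with
  | zero => simp
  | succ k ih =>
    rw [sum_range_succ, ih]
    push_cast
    ring

theorem hasSum_threshold_cost {φ : ℕ → ℝ} {c r : ℝ} (hr : ‖r‖ < 1) (m : ℕ) (b : ℝ)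
    (hhead : ∀ i < m, φ (i + 1) = c) (htail : ∀ n : ℕ, φ (n + m + 1) = c * r ^ n) :
    HasSum (fun s : ℕ => φ (s + 1) * (((s : ℝ) + 1) + b * (if m + 1 ≤ s + 1 then 1 else 0)))
      (c * (m * (m + 1) / 2 + ((m + 1) + b) / (1 - r) + r / (1 - r) ^ 2)) := by
  have hhead_sum : ∑ i ∈ range m, φ (i + 1) *
      (((i : ℝ) + 1) + b * (if m + 1 ≤ i + 1 then 1 else 0)) = c * (m * (m + 1) / 2) := by
    rw [← sum_range_cast_add_one, mul_sum]
    refine sum_congr rfl fun i hi => ?_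
    rw [mem_range] at hi
    rw [hhead i hi, if_neg (by omega)]
    ring
  have htail_term : ∀ n : ℕ, φ (n + m + 1) *
      (((n + m : ℕ) : ℝ) + 1 + b * (if m + 1 ≤ n + m + 1 then 1 else 0)) =
      c * ((n + ((m + 1) + b)) * r ^ n) := fun n => by
    rw [htail n, if_pos (by omega)]
    push_cast
    ring
  convert HasSum.sum_range_add (k := m)
    (m := c * (((m + 1) + b) / (1 - r) + r / (1 - r) ^ 2)) ?_ using 1
  · rw [hhead_sum]
    ring
  simp only [htail_term]
  exact (hasSum_add_mul_geometric hr _).mul_left c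

theorem expected_cost_closed_form_general (Ω : ℕ) (hΩ : 1 ≤ Ω) (p_z ω C_u : ℝ)
    (hpz0 : 0 < p_z) (hpz1 : p_z < 1)
    (φ : ℕ → ℝ)
    (hφ1 : ∀ s : ℕ, 1 ≤ s → s ≤ Ω →
      φ s = (1 - p_z) / ((Ω : ℝ) * (1 - p_z) + p_z))
    (hφ2 : ∀ s : ℕ, Ω < s →
      φ s = (1 - p_z) * p_z ^ (s - Ω) / ((Ω : ℝ) * (1 - p_z) + p_z)) :
    HasSum (fun s : ℕ => φ (s + 1) *
        (((s : ℝ) + 1) + ω * C_u * (if Ω ≤ s + 1 then 1 else 0)))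
      ((1 - p_z) / ((Ω : ℝ) * (1 - p_z) + p_z) *
        (((Ω : ℝ) ^ 2 - (Ω : ℝ)) / 2 + ((Ω : ℝ) + ω * C_u) / (1 - p_z)
          + p_z / (1 - p_z) ^ 2)) := by
  obtain ⟨m, rfl⟩ : ∃ m, Ω = m + 1 := ⟨Ω - 1, by omega⟩
  set c := (1 - p_z) / (((m + 1 : ℕ) : ℝ) * (1 - p_z) + p_z)
  have hφ_tail : ∀ n : ℕ, φ (n + m + 1) = c * p_z ^ n := by
    rintro (_ | n)
    · simpa using hφ1 (m + 1) (by omega) le_rfl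
    · rw [hφ2 _ (by omega), show n + 1 + m + 1 - (m + 1) = n + 1 by omega]
      ring
  have hr : ‖p_z‖ < 1 := by rwa [Real.norm_of_nonneg hpz0.le]
  convert hasSum_threshold_cost hr m (ω * C_u) (fun i hi => hφ1 (i + 1) (by omega) (by omega))
    hφ_tail using 2
  push_cast
  ring

/-- closed form of the expected cost of the threshold-Ω policy,
`Σ_{s=1}^∞ φ s · (s + ω·C_u·1_{s ≥ Ω})
  = ((1−p_z)/(Ω(1−p_z)+p_z)) · ((Ω²−Ω)/2 + (Ω+ω·C_u)/(1−p_z) + p_z/(1−p_z)²)`. -/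
theorem expected_cost_closed_form (Ω : ℕ) (hΩ : 1 ≤ Ω) (p_z ω C_u : ℝ)
    (hpz0 : 0 < p_z) (hpz1 : p_z < 1) (hω : 0 ≤ ω) (hCu : 0 ≤ C_u)
    (φ : ℕ → ℝ)
    (hφ1 : ∀ s : ℕ, 1 ≤ s → s ≤ Ω →
      φ s = (1 - p_z) / ((Ω : ℝ) * (1 - p_z) + p_z))
    (hφ2 : ∀ s : ℕ, Ω < s →
      φ s = (1 - p_z) * p_z ^ (s - Ω) / ((Ω : ℝ) * (1 - p_z) + p_z)) :
    HasSum (fun s : ℕ => φ (s + 1) *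
        (((s : ℝ) + 1) + ω * C_u * (if Ω ≤ s + 1 then 1 else 0)))
      ((1 - p_z) / ((Ω : ℝ) * (1 - p_z) + p_z) *
        (((Ω : ℝ) ^ 2 - (Ω : ℝ)) / 2 + ((Ω : ℝ) + ω * C_u) / (1 - p_z)
          + p_z / (1 - p_z) ^ 2)) :=
  expected_cost_closed_form_general Ω hΩ p_z ω C_u hpz0 hpz1 φ hφ1 hφ2
end

section
/- Let p_z ∈ (0,1), ω ≥ 0, C_u ≥ 0, and define J(Ω) = ((1−p_z)/(Ω(1−p_z)+p_z)) · ( (Ω² − Ω)/2 + (Ω + ω·C_u)/(1−p_z) + p_z/(1−p_z)² ) for real Ω. Then J is a convex function on the interval (−p_z/(1−p_z), ∞); in particular J is convex on [0, ∞). -/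
/-!
Dividing the quadratic numerator by the affine denominator `L(Ω) = (1 - p_z) Ω + p_z` gives
`J(Ω) = Ω / 2 + 1 / (2 (1 - p_z)) + (ω C_u + p_z / (2 (1 - p_z))) / L(Ω)`,
an affine function plus a nonnegative multiple of `1 / L`, which is convex where `L > 0`.
-/

open Set

section

variable {𝕜 : Type*} [Field 𝕜] [LinearOrder 𝕜] [IsStrictOrderedRing 𝕜]

lemma convexOn_inv_affine (a b : 𝕜) :
    ConvexOn 𝕜 {x | 0 < a * x + b} fun x => (a * x + b)⁻¹ := by
  let L : 𝕜 →ᵃ[𝕜] 𝕜 := AffineMap.lineMap b (a + b)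
  have hL : ∀ x, L x = a * x + b := fun x => by
    simp only [L, AffineMap.lineMap_apply_module']; ring
  have hS : {x | 0 < a * x + b} = L ⁻¹' Ioi 0 := by ext x; simp [hL]
  rw [hS]
  simpa only [Function.comp_def, hL, zpow_neg_one] using
    (convexOn_zpow (𝕜 := 𝕜) (-1)).comp_affineMap L

lemma convexOn_affine_add_mul_inv_affine (a b m n : 𝕜) {c : 𝕜} (hc : 0 ≤ c) :
    ConvexOn 𝕜 {x | 0 < a * x + b} fun x => m * x + n + c * (a * x + b)⁻¹ := by
  have hinv := convexOn_inv_affine a b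
  exact (((LinearMap.mulLeft 𝕜 m).convexOn hinv.1).add_const n).add (hinv.smul hc)

lemma Ioi_neg_div_eq_setOf_pos {p q : 𝕜} (hq : 0 < q) : Ioi (-p / q) = {x | 0 < q * x + p} := by
  ext x
  simp only [mem_Ioi, mem_ofPred_eq, div_lt_iff₀ hq]
  constructor <;> intro h <;> linarith

end

lemma cost_eq_affine_add_mul_inv (p k x : ℝ) (hp : p ≠ 1) (hL : (1 - p) * x + p ≠ 0) :
    (1 - p) / (x * (1 - p) + p) * ((x ^ 2 - x) / 2 + (x + k) / (1 - p) + p / (1 - p) ^ 2) =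
      1 / 2 * x + 1 / (2 * (1 - p)) + (k + p / (2 * (1 - p))) * ((1 - p) * x + p)⁻¹ := by
  have hq : 1 - p ≠ 0 := sub_ne_zero.mpr hp.symm
  rw [mul_comm x]
  field_simp
  ring

/-- the total average cost
`J(Ω) = ((1−p_z)/(Ω(1−p_z)+p_z))·((Ω²−Ω)/2 + (Ω+ω·C_u)/(1−p_z) + p_z/(1−p_z)²)`
is convex on `(−p_z/(1−p_z), ∞)`, and in particular convex on `[0, ∞)`. -/
theorem cost_convex (p_z ω C_u : ℝ) (hpz0 : 0 < p_z) (hpz1 : p_z < 1)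
    (hω : 0 ≤ ω) (hCu : 0 ≤ C_u) (J : ℝ → ℝ)
    (hJ : ∀ Ω : ℝ, J Ω = (1 - p_z) / (Ω * (1 - p_z) + p_z) *
      ((Ω ^ 2 - Ω) / 2 + (Ω + ω * C_u) / (1 - p_z) + p_z / (1 - p_z) ^ 2)) :
    ConvexOn ℝ (Set.Ioi (-p_z / (1 - p_z))) J ∧ ConvexOn ℝ (Set.Ici 0) J := by
  have hq : 0 < 1 - p_z := sub_pos.mpr hpz1
  have hc : 0 ≤ ω * C_u + p_z / (2 * (1 - p_z)) := by positivity
  have hJS : ConvexOn ℝ (Ioi (-p_z / (1 - p_z))) J := by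
    rw [Ioi_neg_div_eq_setOf_pos hq]
    refine (convexOn_affine_add_mul_inv_affine _ _ (1 / 2) (1 / (2 * (1 - p_z))) hc).congr
      fun x hx => ?_
    rw [hJ, cost_eq_affine_add_mul_inv _ _ _ hpz1.ne hx.ne']
  have hsub : Ici 0 ⊆ Ioi (-p_z / (1 - p_z)) := fun x hx =>
    (div_neg_of_neg_of_pos (neg_neg_of_pos hpz0) hq).trans_le hx
  exact ⟨hJS, hJS.subset hsub (convex_Ici 0)⟩
end

section
/- Let p_z ∈ (0,1), ω ≥ 0, C_u ≥ 0, define J(Ω) = ((1−p_z)/(Ω(1−p_z)+p_z)) · ( (Ω² − Ω)/2 + (Ω + ω·C_u)/(1−p_z) + p_z/(1−p_z)² ), and set Ω* = (√(p_z + 2ω·C_u·(1−p_z)) − p_z)/(1−p_z). Then the derivative of J vanishes at Ω*; equivalently, Ω* is the unique nonnegative root of the quadratic equation (1−p_z)·Ω² + 2p_z·Ω − (p_z + 2ω·C_u) = 0. -/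
/-!
Writing `D(Ω) = Ω(1 - p_z) + p_z`, the quotient rule gives
`J'(Ω) = (1 - p_z) / D(Ω)² · Q(Ω) / 2` with `Q(Ω) = (1 - p_z)Ω² + 2p_zΩ - (p_z + 2ωC_u)`,
so the critical points of `J` are the roots of `Q`. Completing the square,
`(1 - p_z) Q(Ω) = D(Ω)² - (p_z + 2ωC_u(1 - p_z))`, whose nonnegative root is `Ω*`;
`Q` is increasing on `[0, ∞)`, so that root is unique.
-/

open Real

/-- The nonnegative root of `a x² + 2 b x - c` when `a > 0` and `c ≥ 0`. -/
noncomputable def posQuadRoot (a b c : ℝ) : ℝ := (√(b ^ 2 + a * c) - b) / a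

section posQuadRoot

variable {a b c : ℝ}

lemma mul_posQuadRoot_add (ha : a ≠ 0) :
    a * posQuadRoot a b c + b = √(b ^ 2 + a * c) := by
  rw [posQuadRoot]
  field_simp
  ring

lemma posQuadRoot_isRoot (ha : a ≠ 0) (hdisc : 0 ≤ b ^ 2 + a * c) :
    a * posQuadRoot a b c ^ 2 + 2 * b * posQuadRoot a b c - c = 0 := by
  have hsq := congrArg (· ^ 2) (mul_posQuadRoot_add (b := b) (c := c) ha)
  simp only [sq_sqrt hdisc] at hsq
  apply mul_left_cancel₀ ha
  linear_combination hsq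

lemma posQuadRoot_nonneg (ha : 0 < a) (hc : 0 ≤ c) :
    0 ≤ posQuadRoot a b c := by
  refine div_nonneg (sub_nonneg.mpr ?_) ha.le
  exact le_sqrt_of_sq_le (le_add_of_nonneg_right (mul_nonneg ha.le hc))

end posQuadRoot

lemma eq_of_quadratic_roots_nonneg {a b c x y : ℝ} (ha : 0 < a) (hb : 0 ≤ b)
    (hx : 0 ≤ x) (hy : 0 ≤ y)
    (hxroot : a * x ^ 2 + 2 * b * x - c = 0) (hyroot : a * y ^ 2 + 2 * b * y - c = 0) :
    x = y := by
  have hfactor : (x - y) * (a * (x + y) + 2 * b) = 0 := by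
    linear_combination hxroot - hyroot
  rcases mul_eq_zero.mp hfactor with h | h
  · linarith
  · nlinarith

noncomputable def avgCost (p ω C_u Ω : ℝ) : ℝ :=
  (1 - p) / (Ω * (1 - p) + p) *
    ((Ω ^ 2 - Ω) / 2 + (Ω + ω * C_u) / (1 - p) + p / (1 - p) ^ 2)

lemma hasDerivAt_avgCost {p ω C_u Ω : ℝ} (hp : 1 - p ≠ 0) (hD : Ω * (1 - p) + p ≠ 0) :
    HasDerivAt (avgCost p ω C_u)
      ((1 - p) / (Ω * (1 - p) + p) ^ 2 *
        (((1 - p) * Ω ^ 2 + 2 * p * Ω - (p + 2 * ω * C_u)) / 2)) Ω := by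
  have hD' : HasDerivAt (fun Ω : ℝ => Ω * (1 - p) + p) (1 - p) Ω := by
    simpa using ((hasDerivAt_id Ω).mul_const (1 - p)).add_const p
  have hfactor : HasDerivAt (fun Ω : ℝ => (1 - p) / (Ω * (1 - p) + p))
      ((0 * (Ω * (1 - p) + p) - (1 - p) * (1 - p)) / (Ω * (1 - p) + p) ^ 2) Ω :=
    (hasDerivAt_const Ω (1 - p)).div hD' hD
  have hbracket : HasDerivAt
      (fun Ω : ℝ => (Ω ^ 2 - Ω) / 2 + (Ω + ω * C_u) / (1 - p) + p / (1 - p) ^ 2)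
      ((2 * Ω - 1) / 2 + 1 / (1 - p)) Ω := by
    simpa using ((((hasDerivAt_pow 2 Ω).sub (hasDerivAt_id Ω)).div_const 2).add
      (((hasDerivAt_id Ω).add_const (ω * C_u)).div_const (1 - p))).add_const (p / (1 - p) ^ 2)
  refine (hfactor.mul hbracket).congr_deriv ?_
  field_simp
  ring

/-- the derivative of the total average cost `J` vanishes at
`Ω* = (√(p_z + 2ω·C_u·(1−p_z)) − p_z)/(1−p_z)`; equivalently, `Ω*` is the
unique nonnegative root of `(1−p_z)·Ω² + 2p_z·Ω − (p_z + 2ω·C_u) = 0`. -/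
theorem deriv_vanishes_at_threshold (p_z ω C_u : ℝ)
    (hpz0 : 0 < p_z) (hpz1 : p_z < 1) (hω : 0 ≤ ω) (hCu : 0 ≤ C_u)
    (J : ℝ → ℝ)
    (hJ : ∀ Ω : ℝ, J Ω = (1 - p_z) / (Ω * (1 - p_z) + p_z) *
      ((Ω ^ 2 - Ω) / 2 + (Ω + ω * C_u) / (1 - p_z) + p_z / (1 - p_z) ^ 2))
    (Ωstar : ℝ)
    (hΩstar : Ωstar = (Real.sqrt (p_z + 2 * ω * C_u * (1 - p_z)) - p_z) / (1 - p_z)) :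
    deriv J Ωstar = 0 ∧
    (0 ≤ Ωstar ∧ (1 - p_z) * Ωstar ^ 2 + 2 * p_z * Ωstar - (p_z + 2 * ω * C_u) = 0 ∧
      ∀ x : ℝ, 0 ≤ x →
        (1 - p_z) * x ^ 2 + 2 * p_z * x - (p_z + 2 * ω * C_u) = 0 → x = Ωstar) := by
  have hq : 0 < 1 - p_z := by linarith
  have hc : 0 ≤ p_z + 2 * ω * C_u := by positivity
  have hdisc : 0 < p_z ^ 2 + (1 - p_z) * (p_z + 2 * ω * C_u) := by positivity
  have hroot : Ωstar = posQuadRoot (1 - p_z) p_z (p_z + 2 * ω * C_u) := by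
    rw [hΩstar, posQuadRoot, show p_z ^ 2 + (1 - p_z) * (p_z + 2 * ω * C_u) =
      p_z + 2 * ω * C_u * (1 - p_z) by ring]
  have hquad := posQuadRoot_isRoot hq.ne' hdisc.le
  rw [← hroot] at hquad
  have hD : Ωstar * (1 - p_z) + p_z ≠ 0 := by
    rw [mul_comm, hroot, mul_posQuadRoot_add hq.ne']
    exact (sqrt_pos.mpr hdisc).ne'
  have hnonneg : 0 ≤ Ωstar := hroot ▸ posQuadRoot_nonneg hq hc
  refine ⟨?_, hnonneg, hquad,
    fun x hx hxroot => eq_of_quadratic_roots_nonneg hq hpz0.le hx hnonneg hxroot hquad⟩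
  have hJeq : J = avgCost p_z ω C_u := funext hJ
  rw [hJeq, (hasDerivAt_avgCost hq.ne' hD).deriv, hquad]
  simp
end

section
/- Let p_z ∈ (0,1), ω ≥ 0, C_u ≥ 0, define J(Ω) = ((1−p_z)/(Ω(1−p_z)+p_z)) · ( (Ω² − Ω)/2 + (Ω + ω·C_u)/(1−p_z) + p_z/(1−p_z)² ), and set Ω* = (√(p_z + 2ω·C_u·(1−p_z)) − p_z)/(1−p_z). Then Ω* globally minimizes J over the interval (−p_z/(1−p_z), ∞): for every real Ω > −p_z/(1−p_z), J(Ω) ≥ J(Ω*). -/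
/-! With `q = 1 - p_z` and the shifted variable `t = Ω q + p_z > 0`, the cost becomes
`J = (t + s² / t + q) / (2 q)` where `s² = p_z + 2 ω C_u q`. By AM-GM, `t + s² / t ≥ 2 s`
with equality at `t = s`, which is exactly `Ω = Ω*`. -/

lemma two_mul_le_add_sq_div {s t : ℝ} (ht : 0 < t) : 2 * s ≤ t + s ^ 2 / t := by
  have h : t + s ^ 2 / t - 2 * s = (t - s) ^ 2 / t := by
    field_simp
    ring
  rw [← sub_nonneg, h]
  positivity

lemma cost_eq_of_shift (p c Ω : ℝ) (hp : p ≠ 1) (ht : Ω * (1 - p) + p ≠ 0) :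
    (1 - p) / (Ω * (1 - p) + p) * ((Ω ^ 2 - Ω) / 2 + (Ω + c) / (1 - p) + p / (1 - p) ^ 2) =
      ((Ω * (1 - p) + p) + (p + 2 * c * (1 - p)) / (Ω * (1 - p) + p) + (1 - p)) /
        (2 * (1 - p)) := by
  have hq : 1 - p ≠ 0 := sub_ne_zero.mpr hp.symm
  generalize ht_def : Ω * (1 - p) + p = t at ht ⊢
  field_simp
  rw [← ht_def]
  ring

/-- Theorem 2 of the paper: the threshold
`Ω* = (√(p_z + 2ω·C_u·(1−p_z)) − p_z)/(1−p_z)` globally minimizes the total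
average cost `J` over the interval `(−p_z/(1−p_z), ∞)`. -/
theorem threshold_minimizes_cost (p_z ω C_u : ℝ)
    (hpz0 : 0 < p_z) (hpz1 : p_z < 1) (hω : 0 ≤ ω) (hCu : 0 ≤ C_u)
    (J : ℝ → ℝ)
    (hJ : ∀ Ω : ℝ, J Ω = (1 - p_z) / (Ω * (1 - p_z) + p_z) *
      ((Ω ^ 2 - Ω) / 2 + (Ω + ω * C_u) / (1 - p_z) + p_z / (1 - p_z) ^ 2))
    (Ωstar : ℝ)
    (hΩstar : Ωstar = (Real.sqrt (p_z + 2 * ω * C_u * (1 - p_z)) - p_z) / (1 - p_z)) :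
    ∀ Ω : ℝ, -p_z / (1 - p_z) < Ω → J Ωstar ≤ J Ω := by
  intro Ω hΩ
  have hq : 0 < 1 - p_z := sub_pos.mpr hpz1
  set s := Real.sqrt (p_z + 2 * ω * C_u * (1 - p_z))
  have hs_sq : s ^ 2 = p_z + 2 * (ω * C_u) * (1 - p_z) := by
    rw [Real.sq_sqrt (by positivity)]
    ring
  have hs : 0 < s := Real.sqrt_pos.mpr (by positivity)
  have hstar : Ωstar * (1 - p_z) + p_z = s := by
    rw [hΩstar]
    field_simp
    ring
  have ht : 0 < Ω * (1 - p_z) + p_z := by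
    rw [div_lt_iff₀ hq] at hΩ
    linarith
  rw [hJ, hJ, cost_eq_of_shift _ _ _ hpz1.ne ht.ne', cost_eq_of_shift _ _ _ hpz1.ne (hstar ▸ hs.ne'),
    hstar, ← hs_sq]
  have hmin : s + s ^ 2 / s = 2 * s := by
    field_simp
    ring
  rw [hmin]
  gcongr
  exact two_mul_le_add_sq_div ht
end

section
/- Let p_z ∈ (0,1), ω ≥ 0, C_u ≥ 0, define J(Ω) = ((1−p_z)/(Ω(1−p_z)+p_z)) · ( (Ω² − Ω)/2 + (Ω + ω·C_u)/(1−p_z) + p_z/(1−p_z)² ), and set Ω* = (√(p_z + 2ω·C_u·(1−p_z)) − p_z)/(1−p_z). Then J(Ω*) ≤ J(1); that is, the optimal threshold policy achieves a total average cost no greater than that of the zero-wait policy, which updates in every slot (threshold Ω = 1). -/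
/-!
Write `q = 1 - p_z`, `c = ω C_u` and `s = Ω q + p_z`. A direct computation gives
`J(Ω) = 1/2 + (s + K / s) / (2q)` with `K = p_z + 2 q c`, so for `s > 0` the cost is minimised
exactly where `s = √K` (AM–GM), i.e. at `Ω = Ω*`. The zero-wait policy corresponds to `s = 1`.
-/

open Real

noncomputable def thresholdCost (p c Ω : ℝ) : ℝ :=
  (1 - p) / (Ω * (1 - p) + p) * ((Ω ^ 2 - Ω) / 2 + (Ω + c) / (1 - p) + p / (1 - p) ^ 2)

section

variable {p c Ω : ℝ}

lemma thresholdCost_eq (hp : p ≠ 1) (hs : Ω * (1 - p) + p ≠ 0) :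
    thresholdCost p c Ω = 1 / 2 +
      (Ω * (1 - p) + p + (p + 2 * c * (1 - p)) / (Ω * (1 - p) + p)) / (2 * (1 - p)) := by
  have hq : 1 - p ≠ 0 := sub_ne_zero.mpr hp.symm
  unfold thresholdCost
  generalize hS : Ω * (1 - p) + p = s at hs ⊢
  field_simp
  linear_combination (1 + Ω * (1 - p) + s) * hS

lemma sqrt_add_div_sqrt_le {K s : ℝ} (hK : 0 ≤ K) (hs : 0 < s) :
    √K + K / √K ≤ s + K / s := by
  have key : s + K / s - (√K + K / √K) = (s - √K) ^ 2 / s := by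
    rw [div_sqrt]
    field_simp
    linear_combination -sq_sqrt hK
  rw [← sub_nonneg, key]
  positivity

lemma thresholdCost_optimal_le (hp : p < 1) (hK : 0 < p + 2 * c * (1 - p))
    (hs : 0 < Ω * (1 - p) + p) :
    thresholdCost p c ((√(p + 2 * c * (1 - p)) - p) / (1 - p)) ≤ thresholdCost p c Ω := by
  have hq : 0 < 1 - p := sub_pos.mpr hp
  have hs_opt : (√(p + 2 * c * (1 - p)) - p) / (1 - p) * (1 - p) + p = √(p + 2 * c * (1 - p)) := by
    rw [div_mul_cancel₀ _ hq.ne']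
    ring
  rw [thresholdCost_eq hp.ne hs.ne', thresholdCost_eq hp.ne (by rw [hs_opt]; positivity), hs_opt]
  gcongr _ + ?_ / _
  exact sqrt_add_div_sqrt_le hK.le hs

end

/-- the optimal threshold policy is no worse than the zero-wait
policy (threshold `Ω = 1`): `J(Ω*) ≤ J(1)` with
`Ω* = (√(p_z + 2ω·C_u·(1−p_z)) − p_z)/(1−p_z)`. -/
theorem threshold_beats_zero_wait (p_z ω C_u : ℝ)
    (hpz0 : 0 < p_z) (hpz1 : p_z < 1) (hω : 0 ≤ ω) (hCu : 0 ≤ C_u)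
    (J : ℝ → ℝ)
    (hJ : ∀ Ω : ℝ, J Ω = (1 - p_z) / (Ω * (1 - p_z) + p_z) *
      ((Ω ^ 2 - Ω) / 2 + (Ω + ω * C_u) / (1 - p_z) + p_z / (1 - p_z) ^ 2))
    (Ωstar : ℝ)
    (hΩstar : Ωstar = (Real.sqrt (p_z + 2 * ω * C_u * (1 - p_z)) - p_z) / (1 - p_z)) :
    J Ωstar ≤ J 1 := by
  have hq : 0 < 1 - p_z := sub_pos.mpr hpz1
  rw [show J = thresholdCost p_z (ω * C_u) from funext hJ, hΩstar, mul_assoc 2 ω C_u]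
  exact thresholdCost_optimal_le hpz1 (by positivity) (by linarith)
end
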